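/- arXiv:1211.1325 — 2 statements merged into one kernel-verified Lean document; each statement's English description precedes it below -/
import Mathlib

section
/- Every fractionally subadditive nonnegative valuation v on a finite product X = X_1 × ⋯ × X_m admits an XOS representation using only single-minded additive components: there exist a nonempty finite index set L and, for each ℓ ∈ L, an outcome x̂^ℓ ∈ X and nonnegative reals t^ℓ_1, …, t^ℓ_m such that, setting v^ℓ_j(x_j) = t^ℓ_j if x_j = x̂^ℓ_j and v^ℓ_j(x_j) = 0 otherwise, one has v(x) = max_{ℓ∈L} Σ_{j=1}^m v^ℓ_j(x_j) for every x ∈ X. -/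
/-- `v` is fractionally subadditive (β = 1). -/
def FracSubadd {m : ℕ} {X : Fin m → Type*} [∀ j, DecidableEq (X j)]
    (v : (∀ j, X j) → ℝ) : Prop :=
  ∀ (x : ∀ j, X j) (K : ℕ) (y : Fin (K + 1) → ∀ j, X j) (α : Fin (K + 1) → ℝ),
    (∀ ℓ, 0 ≤ α ℓ) →
    (∀ j : Fin m, 1 ≤ ∑ ℓ, if y ℓ j = x j then α ℓ else 0) →
    v x ≤ ∑ ℓ, α ℓ * v (y ℓ)


section Infrastructure

set_option linter.unusedSectionVars false

open Finset
open scoped InnerProductSpace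


open Finset

variable {ι : Type*} [Fintype ι] [DecidableEq ι]
variable {E : Type*} [NormedAddCommGroup E] [InnerProductSpace ℝ E] [FiniteDimensional ℝ E]

/-- Carathéodory for cones. -/
lemma cone_cara (u : ι → E) (s : Finset ι) :
    ∀ (c : ι → ℝ), (∀ i, 0 ≤ c i) → (∀ i ∉ s, c i = 0) →
    ∃ (t : Finset ι) (d : ι → ℝ), (∀ i, 0 ≤ d i) ∧ (∀ i ∉ t, d i = 0) ∧
      (∑ i, d i • u i = ∑ i, c i • u i) ∧ LinearIndependent ℝ (fun i : t => u i) := by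
  induction s using Finset.strongInduction with
  | _ s ih =>
  intro c hc hsupp
  by_cases hli : LinearIndependent ℝ (fun i : s => u i)
  · exact ⟨s, c, hc, hsupp, rfl, hli⟩
  · rw [Fintype.not_linearIndependent_iff] at hli
    obtain ⟨g0, hg0, i₁, hi₁⟩ := hli
    -- build g : ι → ℝ supported on s with ∑ g i • u i = 0 and a positive entry in s
    have key : ∀ g : ι → ℝ, (∀ i ∉ s, g i = 0) → (∑ i, g i • u i = 0) →
        (∃ i ∈ s, 0 < g i) →
        ∃ (t : Finset ι) (d : ι → ℝ), (∀ i, 0 ≤ d i) ∧ (∀ i ∉ t, d i = 0) ∧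
          (∑ i, d i • u i = ∑ i, c i • u i) ∧ LinearIndependent ℝ (fun i : t => u i) := by
      intro g hgs hgsum ⟨ip, hip, hgip⟩
      classical
      set P : Finset ι := s.filter (fun i => 0 < g i) with hP
      have hPne : P.Nonempty := ⟨ip, by simp [hP, hip, hgip]⟩
      obtain ⟨i0, hi0P, hi0min⟩ := P.exists_min_image (fun i => c i / g i) hPne
      have hi0s : i0 ∈ s := (Finset.mem_filter.mp hi0P).1
      have hgi0 : 0 < g i0 := (Finset.mem_filter.mp hi0P).2
      set lam : ℝ := c i0 / g i0 with hlam
      have hlam0 : 0 ≤ lam := div_nonneg (hc i0) hgi0.le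
      set d : ι → ℝ := fun i => c i - lam * g i with hd
      have hd0 : ∀ i, 0 ≤ d i := by
        intro i
        by_cases hiP : i ∈ P
        · have := hi0min i hiP
          have hgi : 0 < g i := (Finset.mem_filter.mp hiP).2
          have : lam * g i ≤ c i := by
            rw [← le_div_iff₀ hgi]; exact this
          simpa [hd] using sub_nonneg.mpr this
        · have hgle : g i ≤ 0 := by
            by_cases his : i ∈ s
            · by_contra h
              exact hiP (Finset.mem_filter.mpr ⟨his, lt_of_not_ge h⟩)
            · simp [hgs i his]
          have : 0 ≤ -(lam * g i) := by
            rw [neg_nonneg]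
            exact mul_nonpos_of_nonneg_of_nonpos hlam0 hgle
          have := add_nonneg (hc i) this
          simpa [hd, sub_eq_add_neg] using this
      have hdi0 : d i0 = 0 := by
        simp [hd, hlam, div_mul_cancel₀ _ hgi0.ne']
      have hdsupp : ∀ i ∉ s.erase i0, d i = 0 := by
        intro i hi
        by_cases h : i = i0
        · rw [h]; exact hdi0
        · have his : i ∉ s := fun hs => hi (Finset.mem_erase.mpr ⟨h, hs⟩)
          simp [hd, hsupp i his, hgs i his]
      have hdsum : ∑ i, d i • u i = ∑ i, c i • u i := by
        simp only [hd, sub_smul, mul_smul, Finset.sum_sub_distrib]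
        rw [← Finset.smul_sum, hgsum, smul_zero, sub_zero]
      obtain ⟨t, d', h1, h2, h3, h4⟩ := ih (s.erase i0) (Finset.erase_ssubset hi0s) d hd0 hdsupp
      exact ⟨t, d', h1, h2, h3.trans hdsum, h4⟩
    -- define g from g0
    set g : ι → ℝ := fun i => if h : i ∈ s then g0 ⟨i, h⟩ else 0 with hg
    have hgs : ∀ i ∉ s, g i = 0 := fun i hi => by simp [hg, hi]
    have hgsum : ∑ i, g i • u i = 0 := by
      rw [← Finset.sum_subset (Finset.subset_univ s) (by intro i _ hi; simp [hg, hi])]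
      rw [← Finset.sum_attach s (fun i => g i • u i)]
      simpa [hg] using hg0
    rcases lt_or_gt_of_ne hi₁ with hneg | hpos
    · refine key (-g) (fun i hi => by simp [hgs i hi]) (by simpa using hgsum) ⟨i₁, i₁.2, ?_⟩
      simp only [Pi.neg_apply, hg, dif_pos i₁.2]
      simpa using hneg
    · exact key g hgs hgsum ⟨i₁, i₁.2, by simp [hg, i₁.2, hpos]⟩

/-- cone generated by finitely many vectors with a fixed finite support set is closed,
assuming linear independence on that support. -/
lemma cone_t_closed (u : ι → E) (t : Finset ι)
    (hli : LinearIndependent ℝ (fun i : t => u i)) :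
    IsClosed {z : E | ∃ d : ι → ℝ, (∀ i, 0 ≤ d i) ∧ (∀ i ∉ t, d i = 0) ∧ ∑ i, d i • u i = z} := by
  classical
  let f : (t → ℝ) →ₗ[ℝ] E :=
    { toFun := fun d => ∑ i : t, d i • u i
      map_add' := by intro a b; simp [add_smul, Finset.sum_add_distrib]
      map_smul' := by intro r a; simp [mul_smul, Finset.smul_sum] }
  have hker : LinearMap.ker f = ⊥ := by
    rw [LinearMap.ker_eq_bot']
    intro d hd
    have := Fintype.linearIndependent_iff.mp hli d hd
    funext i; exact this i
  have hemb : Topology.IsClosedEmbedding f := f.isClosedEmbedding_of_injective hker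
  have horth : IsClosed {d : t → ℝ | ∀ i, 0 ≤ d i} := by
    have : {d : t → ℝ | ∀ i, 0 ≤ d i} = ⋂ i, {d | 0 ≤ d i} := by ext; simp [Set.mem_iInter]
    rw [this]
    exact isClosed_iInter fun i => isClosed_Ici.preimage (continuous_apply i)
  have him : {z : E | ∃ d : ι → ℝ, (∀ i, 0 ≤ d i) ∧ (∀ i ∉ t, d i = 0) ∧ ∑ i, d i • u i = z}
      = f '' {d : t → ℝ | ∀ i, 0 ≤ d i} := by
    ext z
    constructor
    · rintro ⟨d, hd0, hdsupp, rfl⟩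
      refine ⟨fun i => d i, fun i => hd0 i, ?_⟩
      show ∑ i : t, d i • u i = ∑ i, d i • u i
      rw [Finset.sum_coe_sort t (fun i => d i • u i)]
      exact Finset.sum_subset (Finset.subset_univ t)
        (by intro i _ hi; simp [hdsupp i hi])
    · rintro ⟨d, hd, rfl⟩
      refine ⟨fun i => if h : i ∈ t then d ⟨i, h⟩ else 0, ?_, ?_, ?_⟩
      · intro i; by_cases h : i ∈ t
        · simpa [h] using hd ⟨i, h⟩
        · simp [h]
      · intro i hi; simp [hi]
      · show _ = ∑ i : t, d i • u i
        rw [← Finset.sum_subset (Finset.subset_univ t)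
          (by intro i _ hi; simp [hi])]
        rw [← Finset.sum_coe_sort t fun i => (if h : i ∈ t then d ⟨i, h⟩ else 0) • u i]
        exact Finset.sum_congr rfl fun i _ => by simp [i.2]
  rw [him]
  exact hemb.isClosedMap _ horth

lemma cone_closed (u : ι → E) :
    IsClosed {z : E | ∃ c : ι → ℝ, (∀ i, 0 ≤ c i) ∧ ∑ i, c i • u i = z} := by
  classical
  have : {z : E | ∃ c : ι → ℝ, (∀ i, 0 ≤ c i) ∧ ∑ i, c i • u i = z}
      = ⋃ t : Finset ι, {z : E | ∃ d : ι → ℝ, (∀ i, 0 ≤ d i) ∧ (∀ i ∉ t, d i = 0) ∧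
          (∑ i, d i • u i = z) ∧ LinearIndependent ℝ (fun i : t => u i)} := by
    ext z
    simp only [Set.mem_setOf_eq, Set.mem_iUnion]
    constructor
    · rintro ⟨c, hc, rfl⟩
      obtain ⟨t, d, h1, h2, h3, h4⟩ := cone_cara u Finset.univ c hc (by simp)
      exact ⟨t, d, h1, h2, h3, h4⟩
    · rintro ⟨t, d, h1, h2, h3, _⟩
      exact ⟨d, h1, h3⟩
  rw [this]
  refine isClosed_iUnion_of_finite fun t => ?_
  by_cases hli : LinearIndependent ℝ (fun i : t => u i)
  · have : {z : E | ∃ d : ι → ℝ, (∀ i, 0 ≤ d i) ∧ (∀ i ∉ t, d i = 0) ∧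
        (∑ i, d i • u i = z) ∧ LinearIndependent ℝ (fun i : t => u i)}
        = {z : E | ∃ d : ι → ℝ, (∀ i, 0 ≤ d i) ∧ (∀ i ∉ t, d i = 0) ∧ ∑ i, d i • u i = z} := by
      ext z; constructor
      · rintro ⟨d, h1, h2, h3, _⟩; exact ⟨d, h1, h2, h3⟩
      · rintro ⟨d, h1, h2, h3⟩; exact ⟨d, h1, h2, h3, hli⟩
    rw [this]; exact cone_t_closed u t hli
  · have : {z : E | ∃ d : ι → ℝ, (∀ i, 0 ≤ d i) ∧ (∀ i ∉ t, d i = 0) ∧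
        (∑ i, d i • u i = z) ∧ LinearIndependent ℝ (fun i : t => u i)} = ∅ := by
      ext z; simp only [Set.mem_setOf_eq, Set.mem_empty_iff_false, iff_false]
      rintro ⟨d, _, _, _, h⟩; exact hli h
    rw [this]; exact isClosed_empty

open scoped InnerProductSpace in
/-- Farkas. -/
lemma farkas (u : ι → E) (b : E)
    (h : ∀ w : E, (∀ i, 0 ≤ ⟪u i, w⟫_ℝ) → 0 ≤ ⟪b, w⟫_ℝ) :
    ∃ c : ι → ℝ, (∀ i, 0 ≤ c i) ∧ ∑ i, c i • u i = b := by
  classical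
  set C : ConvexCone ℝ E :=
    { carrier := {z : E | ∃ c : ι → ℝ, (∀ i, 0 ≤ c i) ∧ ∑ i, c i • u i = z}
      smul_mem' := by
        rintro r hr z ⟨c, hc, rfl⟩
        exact ⟨r • c, fun i => mul_nonneg hr.le (hc i), by
          rw [Finset.smul_sum]; exact Finset.sum_congr rfl fun i _ => by
            simp [mul_smul]⟩
      add_mem' := by
        rintro z ⟨c, hc, rfl⟩ z' ⟨c', hc', rfl⟩
        exact ⟨c + c', fun i => add_nonneg (hc i) (hc' i), by
          simp [add_smul, Finset.sum_add_distrib]⟩ } with hC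
  by_contra hcon
  have hb : b ∉ C := fun hbC => hcon hbC
  have hne : (C : Set E).Nonempty := ⟨0, ⟨0, by simp, by simp⟩⟩
  have hcl : IsClosed (C : Set E) := cone_closed u
  obtain ⟨y, hy1, hy2⟩ :=
    ProperCone.hyperplane_separation' (⟨C.toPointedCone (.of_nonempty_of_isClosed hne hcl), hcl⟩ : ProperCone ℝ E) hb
  have hui : ∀ i, (u i : E) ∈ C := by
    intro i
    refine ⟨fun j => if j = i then 1 else 0, fun j => by positivity, ?_⟩
    simp [ite_smul]
  have : 0 ≤ ⟪b, y⟫_ℝ := h y fun i => hy1 _ (hui i)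
  rw [real_inner_comm] at this
  linarith [real_inner_comm b y]


private lemma exists_clause {m : ℕ} {X : Fin m → Type*}
    [∀ j, Fintype (X j)] [∀ j, Nonempty (X j)] [∀ j, DecidableEq (X j)]
    (v : (∀ j, X j) → ℝ) (hv : ∀ x, 0 ≤ v x) (hfs : FracSubadd v) (x : ∀ j, X j) :
    ∃ t : Fin m → ℝ, (∀ j, 0 ≤ t j) ∧
      (∀ y : ∀ j, X j, (∑ j, if y j = x j then t j else 0) ≤ v y) ∧
      v x ≤ ∑ j, t j := by
  classical
  set u : (Sum (Fin m) (Option (∀ j, X j))) → EuclideanSpace ℝ (Option (∀ j, X j)) :=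
    fun i => match i with
    | Sum.inl j => WithLp.toLp 2 (fun o => match o with
        | some y => if y j = x j then (1:ℝ) else 0
        | none => 1)
    | Sum.inr (some y) => WithLp.toLp 2 (fun o => if o = some y then (1:ℝ) else 0)
    | Sum.inr none => WithLp.toLp 2 (fun o => if o = none then (-1:ℝ) else 0)
    with hu
  set b : EuclideanSpace ℝ (Option (∀ j, X j)) := WithLp.toLp 2 (fun o => match o with
    | some y => v y
    | none => v x) with hb
  have hmain : ∀ w : EuclideanSpace ℝ (Option (∀ j, X j)),
      (∀ i, 0 ≤ ⟪u i, w⟫_ℝ) → 0 ≤ ⟪b, w⟫_ℝ := by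
    intro w hw
    set α : (∀ j, X j) → ℝ := fun y => w (some y) with hα
    set β : ℝ := -(w none) with hβ
    have hα0 : ∀ y, 0 ≤ α y := by
      intro y
      have := hw (Sum.inr (some y))
      simpa [hu, PiLp.inner_apply, RCLike.inner_apply, conj_trivial, ite_mul,
        Finset.sum_ite_eq'] using this
    have hβ0 : 0 ≤ β := by
      have := hw (Sum.inr none)
      simpa [hu, hβ, PiLp.inner_apply, RCLike.inner_apply, conj_trivial, ite_mul,
        Finset.sum_ite_eq'] using this
    have hcov : ∀ j, β ≤ ∑ y : (∀ j, X j), (if y j = x j then α y else 0) := by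
      intro j
      have := hw (Sum.inl j)
      simp only [hu, PiLp.inner_apply, RCLike.inner_apply, conj_trivial,
        Fintype.sum_option] at this
      have hsum : ∑ y : (∀ j, X j), w (some y) * (if y j = x j then (1:ℝ) else 0)
          = ∑ y : (∀ j, X j), if y j = x j then α y else 0 := by
        refine Finset.sum_congr rfl fun y _ => ?_
        by_cases h : y j = x j <;> simp [h, hα]
      rw [hsum] at this
      simp only [hβ]
      linarith
    have hinner : ⟪b, w⟫_ℝ = (∑ y : (∀ j, X j), v y * α y) + v x * w none := by
      simp only [hb, PiLp.inner_apply, RCLike.inner_apply, conj_trivial, Fintype.sum_option, hα]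
      rw [Finset.sum_congr rfl fun y _ => mul_comm (v y) (w (some y))]
      ring
    by_contra hneg
    rw [not_le] at hneg
    have hlt : ∑ y : (∀ j, X j), v y * α y < β * v x := by
      rw [hinner] at hneg; rw [hβ]; nlinarith [hneg]
    rcases eq_or_lt_of_le hβ0 with hβz | hβpos
    · have : 0 ≤ ∑ y : (∀ j, X j), v y * α y :=
        Finset.sum_nonneg fun y _ => mul_nonneg (hv y) (hα0 y)
      rw [← hβz] at hlt
      simp at hlt
      linarith
    · -- use fractional subadditivity for a contradiction
      have hcard : 0 < Fintype.card (∀ j, X j) := Fintype.card_pos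
      set K : ℕ := Fintype.card (∀ j, X j) - 1 with hKdef
      have hK : K + 1 = Fintype.card (∀ j, X j) := Nat.succ_pred_eq_of_pos hcard
      set e : Fin (K + 1) ≃ (∀ j, X j) := (finCongr hK).trans (Fintype.equivFin _).symm with he
      have h1 := hfs x K (fun ℓ => e ℓ) (fun ℓ => α (e ℓ) / β)
        (fun ℓ => div_nonneg (hα0 _) hβ0)
        (by
          intro j
          have h2 : ∑ ℓ, (if e ℓ j = x j then α (e ℓ) / β else 0)
              = ∑ y : (∀ j, X j), (if y j = x j then α y / β else 0) :=
            Fintype.sum_equiv e _ _ (fun ℓ => rfl)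
          have h3 : ∑ y : (∀ j, X j), (if y j = x j then α y / β else 0)
              = (∑ y : (∀ j, X j), if y j = x j then α y else 0) / β := by
            rw [Finset.sum_div]
            exact Finset.sum_congr rfl fun y _ => by by_cases h : y j = x j <;> simp [h]
          rw [h2, h3, le_div_iff₀ hβpos, one_mul]
          exact hcov j)
      have h4 : ∑ ℓ, (α (e ℓ) / β) * v (e ℓ)
          = (∑ y : (∀ j, X j), v y * α y) / β := by
        rw [Fintype.sum_equiv e _ (fun y => (α y / β) * v y) (fun ℓ => rfl), Finset.sum_div]
        exact Finset.sum_congr rfl fun y _ => by ring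
      rw [h4] at h1
      have h5 : (∑ y : (∀ j, X j), v y * α y) / β < v x :=
        (div_lt_iff₀ hβpos).mpr (by linarith)
      linarith
  obtain ⟨c, hc0, hc⟩ := farkas u b hmain
  have hcoord : ∀ o, (∑ i, c i • u i) o = b o := fun o => congrArg (fun z => z o) hc
  have happ : ∀ o, (∑ i, c i • u i) o = ∑ i, c i * (u i o) := by
    intro o
    rw [WithLp.ofLp_sum, Finset.sum_apply]
    rfl
  refine ⟨fun j => c (Sum.inl j), fun j => hc0 _, ?_, ?_⟩
  · intro y
    have h := (happ (some y)).symm.trans (hcoord (some y))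
    rw [Fintype.sum_sum_type, Fintype.sum_option] at h
    simp only [hu, hb, Option.some.injEq, reduceCtorEq, if_true, if_false, mul_ite, mul_one,
      mul_zero, mul_neg, Finset.sum_ite_eq, Finset.sum_ite_eq', Finset.mem_univ] at h
    have hnn := hc0 (Sum.inr (some y))
    linarith
  · have h := (happ none).symm.trans (hcoord none)
    rw [Fintype.sum_sum_type, Fintype.sum_option] at h
    simp only [hu, hb, reduceCtorEq, if_true, if_false, mul_one, mul_zero, mul_neg,
      Finset.sum_const_zero, if_pos trivial] at h
    have hnn := hc0 (Sum.inr none)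
    simp only []
    linarith


end Infrastructure

/-- every fractionally subadditive nonnegative valuation admits an XOS
representation whose additive components are single-minded: component `ℓ` is determined by
an outcome `x̂ ℓ` and nonnegative reals `t ℓ j`, taking value `t ℓ j` at `x j = x̂ ℓ j` and `0`
otherwise. -/
theorem stmt_1 {m : ℕ} (hm : 0 < m) (X : Fin m → Type*)
    [∀ j, Fintype (X j)] [∀ j, Nonempty (X j)] [∀ j, DecidableEq (X j)]
    (v : (∀ j, X j) → ℝ) (hv : ∀ x, 0 ≤ v x) (hfs : FracSubadd v) :
    ∃ (K : ℕ) (xhat : Fin (K + 1) → ∀ j, X j) (t : Fin (K + 1) → Fin m → ℝ),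
      (∀ ℓ j, 0 ≤ t ℓ j) ∧
      ∀ x : ∀ j, X j,
        v x = Finset.univ.sup' Finset.univ_nonempty
          fun ℓ => ∑ j, if x j = xhat ℓ j then t ℓ j else 0 := by
  classical
  choose t ht0 ht1 ht2 using fun y : (∀ j, X j) => exists_clause v hv hfs y
  have hcard : 0 < Fintype.card (∀ j, X j) := Fintype.card_pos
  set K : ℕ := Fintype.card (∀ j, X j) - 1 with hKdef
  have hK : K + 1 = Fintype.card (∀ j, X j) := Nat.succ_pred_eq_of_pos hcard
  set e : Fin (K + 1) ≃ (∀ j, X j) := (finCongr hK).trans (Fintype.equivFin _).symm with he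
  refine ⟨K, fun ℓ => e ℓ, fun ℓ => t (e ℓ), fun ℓ j => ht0 _ j, ?_⟩
  intro x
  apply le_antisymm
  · calc v x ≤ ∑ j, t x j := ht2 x
    _ = ∑ j, if x j = (e (e.symm x)) j then t (e (e.symm x)) j else 0 := by
        simp [e.apply_symm_apply]
    _ ≤ _ := Finset.le_sup' (fun ℓ => ∑ j, if x j = e ℓ j then t (e ℓ) j else 0)
        (Finset.mem_univ (e.symm x))
  · exact Finset.sup'_le _ _ fun ℓ _ => ht1 (e ℓ) x
end

section
/- (The first-price public project auction is ((1 − e^{−n})/n, 1)-smooth.) For every n ≥ 1, m ≥ 1, every value matrix v ∈ [0,∞)^{n×m} and every bid profile b, there exist Borel probability measures σ_1,…,σ_n on [0,∞)^m such that Σ_{i=1}^n ∫ u_i^{v_i}(b_{−i}; β) dσ_i(β) ≥ ((1 − e^{−n})/n) · max_{j} Σ_{i=1}^n v_{ij} − Σ_{i=1}^n b_{i,j(b)}. -/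
open MeasureTheory

/-- The least index maximizing `f` (tie-breaking rule for the chosen project). -/
noncomputable def argmaxLeast {m : ℕ} (f : Fin (m + 1) → ℝ) : Fin (m + 1) :=
  (Finset.univ.filter fun i => ∀ j, f j ≤ f i).min' (by
    obtain ⟨i, -, hi⟩ := Finset.exists_max_image (Finset.univ : Finset (Fin (m + 1))) f
      Finset.univ_nonempty
    exact ⟨i, Finset.mem_filter.mpr ⟨Finset.mem_univ i, fun j => hi j (Finset.mem_univ j)⟩⟩)

/-- The project chosen by the first-price public project auction: the (least) project
maximizing the total bid `Σ_i b i j`. -/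
noncomputable def chosenProject {n m : ℕ} (b : Fin (n + 1) → Fin (m + 1) → ℝ) :
    Fin (m + 1) :=
  argmaxLeast fun j => ∑ i, b i j

lemma le_argmaxLeast {m : ℕ} (f : Fin (m + 1) → ℝ) (j : Fin (m + 1)) :
    f j ≤ f (argmaxLeast f) := by
  have hmem := Finset.min'_mem (Finset.univ.filter fun i => ∀ j, f j ≤ f i)
    (by
      obtain ⟨i, -, hi⟩ := Finset.exists_max_image (Finset.univ : Finset (Fin (m + 1))) f
        Finset.univ_nonempty
      exact ⟨i, Finset.mem_filter.mpr ⟨Finset.mem_univ i, fun j => hi j (Finset.mem_univ j)⟩⟩)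
  rw [Finset.mem_filter] at hmem
  exact hmem.2 j

lemma argmaxLeast_eq_iff {m : ℕ} (f : Fin (m + 1) → ℝ) (j0 : Fin (m + 1)) :
    argmaxLeast f = j0 ↔ (∀ j, f j ≤ f j0) ∧ ∀ k, (∀ j, f j ≤ f k) → j0 ≤ k := by
  constructor
  · rintro rfl
    refine ⟨le_argmaxLeast f, fun k hk => Finset.min'_le _ _
      (Finset.mem_filter.mpr ⟨Finset.mem_univ _, hk⟩)⟩
  · rintro ⟨h1, h2⟩
    refine le_antisymm (Finset.min'_le _ _ (Finset.mem_filter.mpr ⟨Finset.mem_univ _, h1⟩)) ?_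
    apply Finset.le_min'
    intro k hk
    exact h2 k (Finset.mem_filter.mp hk).2

lemma argmaxLeast_eq_of_strict {m : ℕ} (f : Fin (m + 1) → ℝ) (j0 : Fin (m + 1))
    (h : ∀ j, j ≠ j0 → f j < f j0) : argmaxLeast f = j0 := by
  rw [argmaxLeast_eq_iff]
  refine ⟨fun j => ?_, fun k hk => ?_⟩
  · by_cases hj : j = j0
    · subst hj; exact le_refl _
    · exact (h j hj).le
  · by_cases hkj : k = j0
    · subst hkj; exact le_refl _
    · exact absurd (hk j0) (not_le.mpr (h k hkj))

lemma measurable_argmax {m : ℕ} {α : Type*} [MeasurableSpace α]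
    (S : Fin (m + 1) → α → ℝ) (hS : ∀ j, Measurable (S j)) :
    Measurable fun x => argmaxLeast (fun j => S j x) := by
  apply measurable_to_countable'
  intro j0
  have hset : (fun x => argmaxLeast (fun j => S j x)) ⁻¹' {j0} =
      {x | (∀ j, S j x ≤ S j0 x)} ∩ ⋂ k, {x | (∀ j, S j x ≤ S k x) → j0 ≤ k} := by
    ext x
    simp only [Set.mem_preimage, Set.mem_singleton_iff, argmaxLeast_eq_iff, Set.mem_inter_iff,
      Set.mem_setOf_eq, Set.mem_iInter]
  rw [hset]
  refine MeasurableSet.inter ?_ (MeasurableSet.iInter fun k => ?_)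
  · have : {x | ∀ j, S j x ≤ S j0 x} = ⋂ j, {x | S j x ≤ S j0 x} := by ext x; simp
    rw [this]
    exact MeasurableSet.iInter fun j => measurableSet_le (hS j) (hS j0)
  · by_cases hk : j0 ≤ k
    · have : {x | (∀ j, S j x ≤ S k x) → j0 ≤ k} = Set.univ := by ext x; simp [hk]
      rw [this]; exact MeasurableSet.univ
    · have : {x | (∀ j, S j x ≤ S k x) → j0 ≤ k} = (⋂ j, {x | S j x ≤ S k x})ᶜ := by
        ext x; simp [hk]
      rw [this]
      exact (MeasurableSet.iInter fun j => measurableSet_le (hS j) (hS k)).compl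

lemma measurable_chosen {n m : ℕ} (b : Fin (n + 1) → Fin (m + 1) → ℝ) (i : Fin (n + 1)) :
    Measurable fun β : Fin (m + 1) → ℝ => chosenProject (Function.update b i β) := by
  unfold chosenProject
  apply measurable_argmax
  intro j
  apply Finset.measurable_sum
  intro p _
  have : (fun β : Fin (m + 1) → ℝ => Function.update b i β p j) =
      fun β => if p = i then β j else b p j := by
    ext β
    rw [Function.update_apply]
    split <;> rfl
  rw [this]
  by_cases hp : p = i
  · simp only [hp, if_pos rfl]; exact measurable_pi_apply j
  · simp only [if_neg hp]; exact measurable_const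

lemma measurable_util {n m : ℕ} (v : Fin (n + 1) → Fin (m + 1) → ℝ)
    (b : Fin (n + 1) → Fin (m + 1) → ℝ) (i : Fin (n + 1)) :
    Measurable fun β : Fin (m + 1) → ℝ =>
      v i (chosenProject (Function.update b i β)) -
        β (chosenProject (Function.update b i β)) := by
  have hC := measurable_chosen b i
  have heq : (fun β : Fin (m + 1) → ℝ =>
      v i (chosenProject (Function.update b i β)) -
        β (chosenProject (Function.update b i β))) =
      fun β => ∑ j0 : Fin (m + 1),
        if chosenProject (Function.update b i β) = j0 then v i j0 - β j0 else 0 := by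
    ext β
    rw [Finset.sum_ite_eq (Finset.univ) (chosenProject (Function.update b i β))
      (fun j0 => v i j0 - β j0)]
    simp
  rw [heq]
  apply Finset.measurable_sum
  intro j0 _
  apply Measurable.ite
  · exact hC (measurableSet_singleton j0)
  · exact measurable_const.sub (measurable_pi_apply j0)
  · exact measurable_const

lemma player_bound (v : Fin (n + 1) → Fin (m + 1) → ℝ) (hv : ∀ i j, 0 ≤ v i j)
    (b : Fin (n + 1) → Fin (m + 1) → ℝ) (hb : ∀ i j, 0 ≤ b i j)
    (jstar : Fin (m + 1)) (i : Fin (n + 1)) :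
    ∃ σ : Measure (Fin (m + 1) → ℝ),
      IsProbabilityMeasure σ ∧ σ {β | ∀ j, 0 ≤ β j} = 1 ∧
      v i jstar * ((1 - Real.exp (-(n + 1 : ℝ))) / (n + 1 : ℝ)) -
          (∑ p, b p (chosenProject b)) / (n + 1 : ℝ) ≤
        ∫ β, (v i (chosenProject (Function.update b i β)) -
          β (chosenProject (Function.update b i β))) ∂σ := by
  set N : ℝ := (n + 1 : ℝ) with hNdef
  have hN : 0 < N := by positivity
  set P : ℝ := ∑ p, b p (chosenProject b) with hPdef
  have hP : 0 ≤ P := Finset.sum_nonneg fun p _ => hb p _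
  have hPmax : ∀ j, ∑ p, b p j ≤ P := fun j => le_argmaxLeast (fun j => ∑ p, b p j) j
  have hSmeas : MeasurableSet {β : Fin (m + 1) → ℝ | ∀ j, 0 ≤ β j} := by
    have : {β : Fin (m + 1) → ℝ | ∀ j, 0 ≤ β j} = ⋂ j, {β | 0 ≤ β j} := by ext; simp
    rw [this]
    exact MeasurableSet.iInter fun j => measurableSet_le measurable_const (measurable_pi_apply j)
  by_cases hvi : v i jstar = 0
  · refine ⟨Measure.dirac 0, inferInstance, ?_, ?_⟩
    · rw [Measure.dirac_apply' _ hSmeas]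
      simp [Set.indicator_apply]
    · rw [integral_dirac' _ _ (measurable_util v b i).stronglyMeasurable]
      have h0 : (0 : Fin (m + 1) → ℝ) (chosenProject (Function.update b i 0)) = 0 := rfl
      rw [h0, hvi, sub_zero, zero_mul, zero_sub]
      have : 0 ≤ v i (chosenProject (Function.update b i 0)) := hv i _
      have hPN : 0 ≤ P / N := div_nonneg hP hN.le
      linarith
  · -- main case
    have hvipos : 0 < v i jstar := lt_of_le_of_ne (hv i jstar) (Ne.symm hvi)
    set V : ℝ := ∑ p, v p jstar with hVdef
    have hViV : v i jstar ≤ V :=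
      Finset.single_le_sum (fun p _ => hv p jstar) (Finset.mem_univ i)
    have hV : 0 < V := lt_of_lt_of_le hvipos hViV
    set a : ℝ := v i jstar / V with hadef
    have ha : 0 < a := div_pos hvipos hV
    have haV : a * V = v i jstar := by rw [hadef, div_mul_cancel₀ _ hV.ne']
    set T : ℝ := V * (1 - Real.exp (-N)) with hTdef
    have hexp1 : Real.exp (-N) ≤ 1 := Real.exp_le_one_iff.mpr (by linarith)
    have hexp0 : 0 < Real.exp (-N) := Real.exp_pos _
    have hT0 : 0 ≤ T := mul_nonneg hV.le (by linarith)
    have hTV : T < V := by nlinarith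
    have hVT : V - T = V * Real.exp (-N) := by rw [hTdef]; ring
    have haT : a * T = v i jstar * (1 - Real.exp (-N)) := by
      rw [hadef, hTdef]; field_simp
    set g : ℝ → ℝ := fun y => (N * (V - y))⁻¹ with hgdef
    set fnn : ℝ → NNReal := fun y => (g y).toNNReal with hfnndef
    have hgmeas : Measurable g :=
      ((measurable_const.mul (measurable_const.sub measurable_id)).inv)
    have hfnnmeas : Measurable fnn := hgmeas.real_toNNReal
    set μ : Measure ℝ :=
      (volume.restrict (Set.Ioc 0 T)).withDensity fun y => (fnn y : ENNReal) with hμdef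
    set φ : ℝ → (Fin (m + 1) → ℝ) := fun y => fun j => if j = jstar then a * y else 0
      with hφdef
    have hφ : Measurable φ := by
      apply measurable_pi_lambda
      intro j
      by_cases h : j = jstar
      · simp only [hφdef, h, if_pos rfl]
        exact measurable_const.mul measurable_id
      · simp only [hφdef, if_neg h]
        exact measurable_const
    have hgpos : ∀ y ∈ Set.Ioc (0:ℝ) T, 0 < g y := by
      intro y hy
      have : 0 < V - y := by linarith [hy.2]
      positivity
    -- the key integral
    have hIg : IntegrableOn g (Set.Ioc 0 T) := by
      have hc : ContinuousOn g (Set.Icc 0 T) := by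
        apply ContinuousOn.inv₀
        · exact (continuous_const.mul (continuous_const.sub continuous_id)).continuousOn
        · intro y hy
          have : 0 < V - y := by linarith [hy.2]
          positivity
      exact hc.integrableOn_Icc.mono_set Set.Ioc_subset_Icc_self
    have hI : ∫ y in Set.Ioc (0:ℝ) T, g y = 1 := by
      rw [← intervalIntegral.integral_of_le hT0]
      have h2 : ∀ y, g y = N⁻¹ * (V - y)⁻¹ := fun y => mul_inv N (V - y)
      simp_rw [h2]
      rw [intervalIntegral.integral_const_mul]
      have h3 : ∫ y in (0:ℝ)..T, (V - y)⁻¹ = ∫ u in (V - T)..(V - 0), u⁻¹ := by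
        rw [← intervalIntegral.integral_comp_sub_left (fun u : ℝ => u⁻¹) V]
      rw [h3]
      rw [integral_inv (by
        apply Set.notMem_uIcc_of_lt
        · rw [hVT]; positivity
        · simpa using hV)]
      rw [sub_zero, hVT]
      rw [Real.exp_neg]
      have hEx : Real.exp N ≠ 0 := (Real.exp_pos N).ne'
      have : V / (V * (Real.exp N)⁻¹) = Real.exp N := by field_simp
      rw [this, Real.log_exp]
      field_simp
    have hmass : μ Set.univ = 1 := by
      rw [hμdef, withDensity_apply _ MeasurableSet.univ, Measure.restrict_univ]
      have hcoe : ∀ y, ((fnn y : ENNReal)) = ENNReal.ofReal (g y) := fun y => rfl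
      simp_rw [hcoe]
      rw [← ofReal_integral_eq_lintegral_ofReal hIg
        ((ae_restrict_mem measurableSet_Ioc).mono fun y hy => (hgpos y hy).le)]
      rw [hI, ENNReal.ofReal_one]
    have hprob : IsProbabilityMeasure (Measure.map φ μ) := by
      constructor
      rw [Measure.map_apply hφ MeasurableSet.univ, Set.preimage_univ]
      exact hmass
    have hcompl : μ (Set.Ioc 0 T)ᶜ = 0 := by
      rw [hμdef, withDensity_apply _ measurableSet_Ioc.compl,
        Measure.restrict_restrict measurableSet_Ioc.compl, Set.compl_inter_self]
      simp
    have hsupp : Measure.map φ μ {β | ∀ j, 0 ≤ β j} = 1 := by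
      rw [Measure.map_apply hφ hSmeas]
      have hsub : Set.Ioc (0:ℝ) T ⊆ φ ⁻¹' {β | ∀ j, 0 ≤ β j} := by
        intro y hy
        simp only [Set.mem_preimage, Set.mem_setOf_eq, hφdef]
        intro j
        by_cases h : j = jstar
        · simp only [if_pos h]
          exact mul_nonneg ha.le hy.1.le
        · simp only [if_neg h, le_refl]
      refine le_antisymm (by rw [← hmass]; exact measure_mono (Set.subset_univ _)) ?_
      calc (1 : ENNReal) = μ Set.univ := hmass.symm
        _ = μ (Set.Ioc 0 T) + μ (Set.Ioc 0 T)ᶜ := (measure_add_measure_compl measurableSet_Ioc).symm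
        _ = μ (Set.Ioc 0 T) := by rw [hcompl, add_zero]
        _ ≤ μ (φ ⁻¹' {β | ∀ j, 0 ≤ β j}) := measure_mono hsub
    refine ⟨Measure.map φ μ, hprob, hsupp, ?_⟩
    set u : (Fin (m + 1) → ℝ) → ℝ := fun β =>
      v i (chosenProject (Function.update b i β)) -
        β (chosenProject (Function.update b i β)) with hudef
    have humeas : Measurable u := measurable_util v b i
    have hφapp : ∀ (y : ℝ) (j : Fin (m + 1)), φ y j = if j = jstar then a * y else 0 :=
      fun _ _ => rfl
    have hmap : ∫ β, u β ∂(Measure.map φ μ) = ∫ y, u (φ y) ∂μ :=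
      integral_map hφ.aemeasurable humeas.aestronglyMeasurable
    have hwd : ∫ y, u (φ y) ∂μ = ∫ y in Set.Ioc 0 T, (fnn y : ℝ) * u (φ y) := by
      rw [hμdef, integral_withDensity_eq_integral_smul hfnnmeas]
      simp_rw [NNReal.smul_def, smul_eq_mul]
    have hwin : ∀ y : ℝ, 0 < y → P < a * y →
        chosenProject (Function.update b i (φ y)) = jstar := by
      intro y hy0 hPy
      unfold chosenProject
      apply argmaxLeast_eq_of_strict
      intro j hj
      have h1 : ∑ p, Function.update b i (φ y) p j ≤ P := by
        refine le_trans (Finset.sum_le_sum fun p _ => ?_) (hPmax j)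
        show Function.update b i (φ y) p j ≤ b p j
        by_cases hp : p = i
        · subst hp
          rw [Function.update_self, hφapp, if_neg hj]
          exact hb p j
        · rw [Function.update_of_ne hp]
      have h2 : a * y ≤ ∑ p, Function.update b i (φ y) p jstar := by
        have hterm : Function.update b i (φ y) i jstar = a * y := by
          rw [Function.update_self, hφapp, if_pos rfl]
        calc a * y = Function.update b i (φ y) i jstar := hterm.symm
          _ ≤ ∑ p, Function.update b i (φ y) p jstar := by
              refine Finset.single_le_sum (f := fun p => Function.update b i (φ y) p jstar)
                (fun p _ => ?_) (Finset.mem_univ i)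
              show 0 ≤ Function.update b i (φ y) p jstar
              by_cases hp : p = i
              · subst hp
                rw [Function.update_self, hφapp, if_pos rfl]
                exact mul_nonneg ha.le hy0.le
              · rw [Function.update_of_ne hp]
                exact hb p jstar
      linarith
    have hupos : ∀ y ∈ Set.Ioc (0:ℝ) T, 0 ≤ u (φ y) := by
      intro y hy
      rw [hudef]
      simp only
      by_cases hc : chosenProject (Function.update b i (φ y)) = jstar
      · rw [hc, hφapp, if_pos rfl]
        have hay : a * y ≤ a * T := mul_le_mul_of_nonneg_left hy.2 ha.le
        have haT' : a * T ≤ v i jstar := by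
          rw [haT]
          nlinarith [hv i jstar, hexp0]
        linarith
      · rw [hφapp, if_neg hc, sub_zero]
        exact hv i _
    set L : ℝ → ℝ := fun y => Set.indicator (Set.Ioi (P / a)) (fun _ => a / N) y with hLdef
    have hLapp : ∀ y : ℝ, L y = if P / a < y then a / N else 0 := by
      intro y
      rw [hLdef]
      simp [Set.indicator_apply, Set.mem_Ioi]
    have hle : ∀ y ∈ Set.Ioc (0:ℝ) T, L y ≤ (fnn y : ℝ) * u (φ y) := by
      intro y hy
      have hg0 := hgpos y hy
      have hfc : (fnn y : ℝ) = g y := Real.coe_toNNReal _ hg0.le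
      by_cases hc : P < a * y
      · have hLy : L y = a / N := by
          rw [hLapp, if_pos (by rw [div_lt_iff₀ ha]; linarith)]
        rw [hLy, hfc, hudef]
        simp only
        rw [hwin y hy.1 hc, hφapp, if_pos rfl]
        have hVy : 0 < V - y := by linarith [hy.2]
        have h1 : v i jstar - a * y = a * (V - y) := by rw [← haV]; ring
        rw [h1]
        have hgy : g y = (N * (V - y))⁻¹ := rfl
        have h2 : g y * (a * (V - y)) = a / N := by
          rw [hgy]
          field_simp
        rw [h2]
      · have hLy : L y = 0 := by
          rw [hLapp, if_neg (by rw [div_lt_iff₀ ha]; intro h; exact hc (by linarith))]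
        rw [hLy]
        exact mul_nonneg (NNReal.coe_nonneg _) (hupos y hy)
    have hLint : IntegrableOn L (Set.Ioc 0 T) := by
      rw [hLdef]
      have : (fun y => Set.indicator (Set.Ioi (P / a)) (fun _ => a / N) y) =
          Set.indicator (Set.Ioi (P / a)) (fun _ => a / N) := rfl
      rw [this]
      exact (integrableOn_const measure_Ioc_lt_top.ne).indicator measurableSet_Ioi
    have hFmeas : Measurable fun y => (fnn y : ℝ) * u (φ y) :=
      (measurable_coe_nnreal_real.comp hfnnmeas).mul (humeas.comp hφ)
    have hFint : IntegrableOn (fun y => (fnn y : ℝ) * u (φ y)) (Set.Ioc 0 T) := by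
      set C1 : ℝ := (N * (V - T))⁻¹ with hC1
      set C2 : ℝ := (Finset.univ.sup' Finset.univ_nonempty fun j => |v i j|) + a * T with hC2
      have hVT0 : 0 < V - T := by linarith
      have hC10 : 0 < C1 := by rw [hC1]; positivity
      apply Integrable.mono' (integrable_const (C1 * C2)) hFmeas.aestronglyMeasurable
      filter_upwards [ae_restrict_mem measurableSet_Ioc] with y hy
      have hg0 := hgpos y hy
      have hfc : (fnn y : ℝ) = g y := Real.coe_toNNReal _ hg0.le
      have hgC1 : g y ≤ C1 := by
        have h1 : 0 < N * (V - T) := by positivity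
        have h2 : N * (V - T) ≤ N * (V - y) :=
          mul_le_mul_of_nonneg_left (sub_le_sub_left hy.2 V) hN.le
        exact inv_anti₀ h1 h2
      have huC2 : |u (φ y)| ≤ C2 := by
        rw [hudef]
        simp only
        have h1 : |v i (chosenProject (Function.update b i (φ y)))| ≤
            Finset.univ.sup' Finset.univ_nonempty fun j => |v i j| :=
          Finset.le_sup' (fun j => |v i j|) (Finset.mem_univ (chosenProject (Function.update b i (φ y))))
        have h2 : |φ y (chosenProject (Function.update b i (φ y)))| ≤ a * T := by
          rw [hφapp]
          by_cases hc : chosenProject (Function.update b i (φ y)) = jstar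
          · rw [if_pos hc, abs_of_nonneg (mul_nonneg ha.le hy.1.le)]
            exact mul_le_mul_of_nonneg_left hy.2 ha.le
          · rw [if_neg hc, abs_zero]
            exact mul_nonneg ha.le hT0
        calc |v i (chosenProject (Function.update b i (φ y))) -
              φ y (chosenProject (Function.update b i (φ y)))|
            ≤ |v i (chosenProject (Function.update b i (φ y)))| +
              |φ y (chosenProject (Function.update b i (φ y)))| := abs_sub _ _
          _ ≤ C2 := by rw [hC2]; linarith
      rw [Real.norm_eq_abs, abs_mul, hfc, abs_of_nonneg hg0.le]
      have huC20 : (0:ℝ) ≤ |u (φ y)| := abs_nonneg _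
      exact mul_le_mul hgC1 huC2 huC20 hC10.le
    have hLval : v i jstar * ((1 - Real.exp (-N)) / N) - P / N ≤
        ∫ y in Set.Ioc 0 T, L y := by
      have h1 : ∫ y in Set.Ioc (0:ℝ) T, L y =
          ∫ y in Set.Ioc (0:ℝ) T ∩ Set.Ioi (P / a), (fun _ => a / N) y := by
        rw [hLdef]
        exact setIntegral_indicator measurableSet_Ioi
      rw [h1, setIntegral_const, Set.Ioc_inter_Ioi, Real.volume_real_Ioc]
      rw [max_eq_right (div_nonneg hP ha.le)]
      rw [smul_eq_mul]
      have h2 : (T - P / a) * (a / N) = v i jstar * ((1 - Real.exp (-N)) / N) - P / N := by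
        have e1 : (T - P / a) * (a / N) = (a * T - P) / N := by
          field_simp
        rw [e1, haT]
        ring
      calc v i jstar * ((1 - Real.exp (-N)) / N) - P / N
          = (T - P / a) * (a / N) := h2.symm
        _ ≤ max (T - P / a) 0 * (a / N) :=
            mul_le_mul_of_nonneg_right (le_max_left _ _) (by positivity)
    have hmono : ∫ y in Set.Ioc (0:ℝ) T, L y ≤
        ∫ y in Set.Ioc (0:ℝ) T, (fnn y : ℝ) * u (φ y) :=
      setIntegral_mono_on hLint hFint measurableSet_Ioc hle
    rw [hmap, hwd]
    exact le_trans hLval hmono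
/-- the first-price public project auction with `n+1` players is
`((1 − e^{−(n+1)})/(n+1), 1)`-smooth: there are randomized deviations `σ i` (probability
measures on nonnegative bid vectors) whose total deviation utility is at least
`((1 − e^{−(n+1)})/(n+1))·max_j Σ_i v_{ij} − Σ_i b_{i,j(b)}`. -/
theorem stmt_19 (n m : ℕ) (v : Fin (n + 1) → Fin (m + 1) → ℝ) (hv : ∀ i j, 0 ≤ v i j)
    (b : Fin (n + 1) → Fin (m + 1) → ℝ) (hb : ∀ i j, 0 ≤ b i j) :
    ∃ σ : Fin (n + 1) → Measure (Fin (m + 1) → ℝ),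
      (∀ i, IsProbabilityMeasure (σ i)) ∧
      (∀ i, σ i {β | ∀ j, 0 ≤ β j} = 1) ∧
      ((1 - Real.exp (-(n + 1 : ℝ))) / (n + 1 : ℝ)) *
          (Finset.univ.sup' Finset.univ_nonempty fun j => ∑ i, v i j) -
          (∑ i, b i (chosenProject b)) ≤
        ∑ i, ∫ β, (v i (chosenProject (Function.update b i β)) -
          β (chosenProject (Function.update b i β))) ∂(σ i) := by
  obtain ⟨jstar, -, hjs⟩ :=
    Finset.exists_mem_eq_sup' Finset.univ_nonempty (fun j => ∑ i, v i j)
  choose σ hprob hsupp hineq using fun i => player_bound v hv b hb jstar i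
  refine ⟨σ, hprob, hsupp, ?_⟩
  have hsum : ∑ i : Fin (n + 1),
      (v i jstar * ((1 - Real.exp (-(n + 1 : ℝ))) / (n + 1 : ℝ)) -
        (∑ p, b p (chosenProject b)) / (n + 1 : ℝ)) =
      ((1 - Real.exp (-(n + 1 : ℝ))) / (n + 1 : ℝ)) * (∑ i, v i jstar) -
        ∑ i, b i (chosenProject b) := by
    rw [Finset.sum_sub_distrib, ← Finset.sum_mul, Finset.sum_const, Finset.card_univ,
      Fintype.card_fin, nsmul_eq_mul]
    have hne : ((n : ℝ) + 1) ≠ 0 := by positivity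
    push_cast
    field_simp
  rw [hjs, ← hsum]
  exact Finset.sum_le_sum fun i _ => hineq i
end
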